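/- arXiv:1610.06515 — 6 statements merged into one kernel-verified Lean document; each statement's English description precedes it below -/
import Mathlib

section
/- Every edge of the tree T appears exactly twice in the main cycle MC. -/
open SimpleGraph

variable {V : Type} [Fintype V] [DecidableEq V]

/-- The unique path between `x` and `y` in the tree `T`. -/
noncomputable def tpath {T : SimpleGraph V} (hT : T.IsTree) (x y : V) : T.Walk x y :=
  (hT.existsUnique_path x y).exists.choose

/-- The concatenation `p_T(v 0, v 1) ++ p_T(v 1, v 2) ++ ⋯ ++ p_T(v (k-1), v k)`. -/
noncomputable def prefixTour {T : SimpleGraph V} (hT : T.IsTree) (v : ℕ → V) :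
    (k : ℕ) → T.Walk (v 0) (v k)
  | 0 => SimpleGraph.Walk.nil
  | k + 1 => (prefixTour hT v k).append (tpath hT (v k) (v (k + 1)))

/-- The main cycle `MC`: the closed walk
`p_T(v 0, v 1) ++ ⋯ ++ p_T(v (n-2), v (n-1)) ++ p_T(v (n-1), v 0)`. -/
noncomputable def mainCycle {T : SimpleGraph V} (hT : T.IsTree) (v : ℕ → V) (n : ℕ) :
    T.Walk (v 0) (v 0) :=
  (prefixTour hT v (n - 1)).append (tpath hT (v (n - 1)) (v 0))

/-- `v 0, v 1, …, v (n-1)` is an enumeration of the vertices of the tree `T` in the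
order they are first visited by a depth-first search of `T` (started at `v 0`):
equivalently, it is a bijective enumeration such that for every vertex `v i`, the
set of indices `j` whose vertex `v j` lies in the subtree of `v i` (with respect to
the root `v 0`, i.e. such that `v i` lies on the tree path from `v 0` to `v j`) is a
contiguous interval `[i, i + s)` beginning at `i`. -/
def IsDFSOrder {T : SimpleGraph V} (hT : T.IsTree) (v : ℕ → V) (n : ℕ) : Prop :=
  (Function.Bijective fun i : Fin n => v i) ∧
  ∀ i : ℕ, i < n → ∃ s : ℕ, ∀ j : ℕ, j < n →
    (v i ∈ (tpath hT (v 0) (v j)).support ↔ i ≤ j ∧ j < i + s)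

set_option linter.unusedSectionVars false
set_option linter.unusedVariables false

variable {T : SimpleGraph V}

lemma tpath_isPath (hT : T.IsTree) (x y : V) : (tpath hT x y).IsPath :=
  (hT.existsUnique_path x y).exists.choose_spec

lemma tpath_eq (hT : T.IsTree) {x y : V} (p : T.Walk x y) (hp : p.IsPath) :
    p = tpath hT x y :=
  (hT.existsUnique_path x y).unique hp (tpath_isPath hT x y)

lemma tpath_self (hT : T.IsTree) (x : V) : tpath hT x x = SimpleGraph.Walk.nil :=
  (tpath_eq hT _ SimpleGraph.Walk.IsPath.nil).symm

lemma tpath_singleton (hT : T.IsTree) {a b : V} (h : T.Adj a b) :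
    tpath hT a b = SimpleGraph.Walk.cons h SimpleGraph.Walk.nil :=
  (tpath_eq hT _ (SimpleGraph.Path.singleton h).2).symm

lemma edge_mem_tpath_singleton (hT : T.IsTree) {a b : V} (h : T.Adj a b) :
    s(a, b) ∈ (tpath hT a b).edges := by
  rw [tpath_singleton hT h]
  simp

lemma edge_mem_tpath_iff_not_reachable (hT : T.IsTree) (e : Sym2 V) (x y : V) :
    e ∈ (tpath hT x y).edges ↔ ¬ (T.deleteEdges {e}).Reachable x y := by
  constructor
  · intro hmem hre
    obtain ⟨p, hp⟩ : ∃ p : (T.deleteEdges {e}).Walk x y, p.IsPath :=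
      hre.elim_path fun q => ⟨q.1, q.2⟩
    have hsub : ∀ f ∈ p.edges, f ∈ T.edgeSet := by
      intro f hf
      have := p.edges_subset_edgeSet hf
      rw [edgeSet_deleteEdges] at this
      exact this.1
    have hnot : e ∉ p.edges := by
      intro hf
      have := p.edges_subset_edgeSet hf
      rw [edgeSet_deleteEdges] at this
      exact this.2 rfl
    have heq : p.transfer T hsub = tpath hT x y := tpath_eq hT _ (hp.transfer hsub)
    rw [← heq, SimpleGraph.Walk.edges_transfer] at hmem
    exact hnot hmem
  · intro hre
    by_contra hmem
    exact hre ((tpath hT x y).toDeleteEdges {e}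
      (fun f hf hfe => hmem ((Set.mem_singleton_iff.mp hfe) ▸ hf))).reachable

lemma mem_support_iff_edge_mem (hT : T.IsTree) {a b r : V} (hab : T.Adj a b)
    (ha : a ∈ (tpath hT r b).support) (w : V) :
    b ∈ (tpath hT r w).support ↔ s(a, b) ∈ (tpath hT r w).edges := by
  constructor
  · intro hb
    have hmem : s(a, b) ∈ (tpath hT r b).edges := by
      have h2 : ((tpath hT r b).dropUntil a ha).IsPath := (tpath_isPath hT r b).dropUntil ha
      have h2e : (tpath hT r b).dropUntil a ha = tpath hT a b := tpath_eq hT _ h2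
      have hm : s(a, b) ∈ ((tpath hT r b).dropUntil a ha).edges := by
        rw [h2e]; exact edge_mem_tpath_singleton hT hab
      rw [← (tpath hT r b).take_spec ha, SimpleGraph.Walk.edges_append, List.mem_append]
      exact Or.inr hm
    have hq : ((tpath hT r w).takeUntil b hb).IsPath := (tpath_isPath hT r w).takeUntil hb
    have hqe : (tpath hT r w).takeUntil b hb = tpath hT r b := tpath_eq hT _ hq
    rw [← (tpath hT r w).take_spec hb, SimpleGraph.Walk.edges_append, List.mem_append]
    exact Or.inl (by rw [hqe]; exact hmem)
  · intro hmem
    exact (tpath hT r w).snd_mem_support_of_mem_edges hmem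

lemma reachable_dichotomy (hT : T.IsTree) {a b : V} (hab : T.Adj a b) (w : V) :
    (T.deleteEdges {s(a, b)}).Reachable a w ∨ (T.deleteEdges {s(a, b)}).Reachable b w := by
  by_cases h : s(a, b) ∈ (tpath hT b w).edges
  · left
    have haw : a ∈ (tpath hT b w).support := (tpath hT b w).fst_mem_support_of_mem_edges h
    have hdrop : ((tpath hT b w).dropUntil a haw).IsPath := (tpath_isPath hT b w).dropUntil haw
    have hdrope : (tpath hT b w).dropUntil a haw = tpath hT a w := tpath_eq hT _ hdrop
    have hmemtake : s(a, b) ∈ ((tpath hT b w).takeUntil a haw).edges := by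
      rw [show (tpath hT b w).takeUntil a haw = tpath hT b a from
          tpath_eq hT _ ((tpath_isPath hT b w).takeUntil haw),
        tpath_singleton hT hab.symm]
      simp [Sym2.eq_swap]
    have hnodup : ((tpath hT b w).edges).Nodup := (tpath_isPath hT b w).isTrail.edges_nodup
    rw [← (tpath hT b w).take_spec haw, SimpleGraph.Walk.edges_append] at hnodup
    have hdisj := List.disjoint_of_nodup_append hnodup
    have hnm : s(a, b) ∉ ((tpath hT b w).dropUntil a haw).edges := fun hx => hdisj hmemtake hx
    rw [hdrope] at hnm
    by_contra hr
    exact hnm ((edge_mem_tpath_iff_not_reachable hT _ a w).mpr hr)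
  · right
    by_contra hr
    exact h ((edge_mem_tpath_iff_not_reachable hT _ b w).mpr hr)

lemma key_lemma (hT : T.IsTree) {a b r : V} (hab : T.Adj a b)
    (ha : a ∈ (tpath hT r b).support) (x y : V) :
    s(a, b) ∈ (tpath hT x y).edges ↔
      ¬ (b ∈ (tpath hT r x).support ↔ b ∈ (tpath hT r y).support) := by
  have hnrb : ¬ (T.deleteEdges {s(a, b)}).Reachable r b := by
    apply (edge_mem_tpath_iff_not_reachable hT _ r b).mp
    exact (mem_support_iff_edge_mem hT hab ha b).mp (SimpleGraph.Walk.end_mem_support _)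
  have hsupp : ∀ w, (b ∈ (tpath hT r w).support ↔ (T.deleteEdges {s(a, b)}).Reachable b w) := by
    intro w
    rw [mem_support_iff_edge_mem hT hab ha w, edge_mem_tpath_iff_not_reachable]
    constructor
    · intro hnr
      rcases reachable_dichotomy hT hab w with h1 | h2
      · rcases reachable_dichotomy hT hab r with h3 | h4
        · exact absurd (h3.symm.trans h1) hnr
        · exact absurd h4 (fun hh => hnrb hh.symm)
      · exact h2
    · intro hbw hrw
      exact hnrb (hrw.trans hbw.symm)
  rw [edge_mem_tpath_iff_not_reachable, hsupp x, hsupp y]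
  apply not_congr
  constructor
  · intro h
    exact ⟨fun hbx => hbx.trans h, fun hby => hby.trans h.symm⟩
  · intro hiff
    rcases reachable_dichotomy hT hab x with h1 | h2
    · have hnbx : ¬ (T.deleteEdges {s(a, b)}).Reachable b x := by
        intro hbx
        exact (edge_mem_tpath_iff_not_reachable hT _ a b).mp
          (edge_mem_tpath_singleton hT hab) (h1.trans hbx.symm)
      have hnby : ¬ (T.deleteEdges {s(a, b)}).Reachable b y := fun hh => hnbx (hiff.mpr hh)
      rcases reachable_dichotomy hT hab y with h3 | h4
      · exact h1.symm.trans h3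
      · exact absurd h4 hnby
    · exact h2.symm.trans (hiff.mp h2)

lemma prefixTour_count (hT : T.IsTree) (v : ℕ → V) (e : Sym2 V) (k : ℕ) :
    (prefixTour hT v k).edges.count e =
      ∑ j ∈ Finset.range k, (tpath hT (v j) (v (j + 1))).edges.count e := by
  induction k with
  | zero => simp [prefixTour]
  | succ k ih =>
    rw [Finset.sum_range_succ, ← ih]
    simp [prefixTour, SimpleGraph.Walk.edges_append, List.count_append]

lemma sum_indicator (i s : ℕ) (hi : 1 ≤ i) (hs : 1 ≤ s) (k : ℕ) :
    (∑ j ∈ Finset.range k,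
      if (i ≤ j ∧ j < i + s) ↔ (i ≤ j + 1 ∧ j + 1 < i + s) then 0 else 1)
      = (if i ≤ k then 1 else 0) + (if i + s ≤ k then 1 else 0) := by
  induction k with
  | zero =>
    rw [Finset.sum_range_zero, if_neg (by omega), if_neg (by omega)]
    rfl
  | succ k ih =>
    rw [Finset.sum_range_succ, ih]
    split_ifs <;> omega

theorem mainCycle_count_edge_eq_two'
    {T : SimpleGraph V} (hT : T.IsTree) (n : ℕ) (hn : 0 < n)
    (v : ℕ → V) (hdfs : IsDFSOrder hT v n)
    {a b : V} (hab : T.Adj a b) (ha : a ∈ (tpath hT (v 0) b).support) :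
    (mainCycle hT v n).edges.count s(a, b) = 2 := by
  obtain ⟨hbij, hchar⟩ := hdfs
  obtain ⟨i, hi⟩ := hbij.2 b
  have hi' : v (i : ℕ) = b := hi
  obtain ⟨s, hs⟩ := hchar i i.2
  rw [hi'] at hs
  -- ¬ P 0
  have hP0 : b ∉ (tpath hT (v 0) (v 0)).support := by
    rw [tpath_self]
    intro hb
    have hbv : b = v 0 := by simpa using hb
    rw [hbv, tpath_self] at ha
    have : a = v 0 := by simpa using ha
    exact hab.ne (this.trans hbv.symm)
  have hs1 : 1 ≤ s := by
    have := (hs i i.2).mp (by rw [hi']; exact SimpleGraph.Walk.end_mem_support _)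
    omega
  have hi1 : 1 ≤ (i : ℕ) := by
    by_contra hc
    exact hP0 ((hs 0 hn).mpr (by omega))
  have key := key_lemma hT hab ha
  have hterm : ∀ j : ℕ, j + 1 < n →
      (tpath hT (v j) (v (j + 1))).edges.count s(a, b) =
        if ((i : ℕ) ≤ j ∧ j < i + s) ↔ ((i : ℕ) ≤ j + 1 ∧ j + 1 < i + s) then 0 else 1 := by
    intro j hj
    have hj1 : j < n := by omega
    by_cases hc : ((i : ℕ) ≤ j ∧ j < i + s) ↔ ((i : ℕ) ≤ j + 1 ∧ j + 1 < i + s)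
    · rw [if_pos hc]
      apply List.count_eq_zero_of_not_mem
      intro hm
      exact (key _ _).mp hm (by rw [hs j hj1, hs (j + 1) hj]; exact hc)
    · rw [if_neg hc]
      apply (tpath_isPath hT _ _).isTrail.count_edges_eq_one
      rw [key]
      rw [hs j hj1, hs (j + 1) hj]
      exact hc
  have hlast : (tpath hT (v (n - 1)) (v 0)).edges.count s(a, b) =
      if (i : ℕ) ≤ n - 1 ∧ n - 1 < i + s then 1 else 0 := by
    have hn1 : n - 1 < n := by omega
    by_cases hq : (i : ℕ) ≤ n - 1 ∧ n - 1 < i + s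
    · rw [if_pos hq]
      apply (tpath_isPath hT _ _).isTrail.count_edges_eq_one
      rw [key]
      intro hiff
      exact hP0 (hiff.mp ((hs (n - 1) hn1).mpr hq))
    · rw [if_neg hq]
      apply List.count_eq_zero_of_not_mem
      intro hm
      apply (key _ _).mp hm
      constructor
      · intro hbn; exact absurd ((hs (n - 1) hn1).mp hbn) hq
      · intro hb0; exact absurd hb0 hP0
  have hin : (i : ℕ) ≤ n - 1 := by have := i.2; omega
  rw [mainCycle, SimpleGraph.Walk.edges_append, List.count_append, prefixTour_count,
    Finset.sum_congr rfl (fun j hj => hterm j (by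
      have := Finset.mem_range.mp hj; omega)),
    sum_indicator (i : ℕ) s hi1 hs1, hlast]
  split_ifs <;> omega

/-- Every edge of the tree `T` appears exactly twice in the main
cycle `MC`. -/
theorem mainCycle_count_edge_eq_two
    {T : SimpleGraph V} (hT : T.IsTree) (n : ℕ) (hn : 0 < n)
    (hcard : Fintype.card V = n) (v : ℕ → V) (hdfs : IsDFSOrder hT v n)
    (e : Sym2 V) (he : e ∈ T.edgeSet) :
    (mainCycle hT v n).edges.count e = 2 := by
  induction e using Sym2.ind with
  | _ a b =>
    rw [SimpleGraph.mem_edgeSet] at he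
    by_cases h : a ∈ (tpath hT (v 0) b).support
    · exact mainCycle_count_edge_eq_two' hT n hn v hdfs he h
    · have hb : b ∈ (tpath hT (v 0) a).support := by
        have hrev : tpath hT b (v 0) = (tpath hT (v 0) b).reverse :=
          (tpath_eq hT _ ((tpath_isPath hT (v 0) b).reverse)).symm
        have hcons : (SimpleGraph.Walk.cons he (tpath hT b (v 0))).IsPath := by
          rw [SimpleGraph.Walk.cons_isPath_iff]
          refine ⟨tpath_isPath _ _ _, ?_⟩
          rw [hrev, SimpleGraph.Walk.support_reverse, List.mem_reverse]
          exact h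
        have heq : SimpleGraph.Walk.cons he (tpath hT b (v 0)) = tpath hT a (v 0) :=
          tpath_eq hT _ hcons
        have hb' : b ∈ (tpath hT a (v 0)).support := by
          rw [← heq, SimpleGraph.Walk.support_cons]
          exact List.mem_cons_of_mem _ (SimpleGraph.Walk.start_mem_support _)
        have hrev2 : tpath hT (v 0) a = (tpath hT a (v 0)).reverse :=
          (tpath_eq hT _ ((tpath_isPath hT a (v 0)).reverse)).symm
        rw [hrev2, SimpleGraph.Walk.support_reverse, List.mem_reverse]
        exact hb'
      rw [Sym2.eq_swap]
      exact mainCycle_count_edge_eq_two' hT n hn v hdfs he.symm hb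
end

section
/- For every state S of a multicast game with n terminals, c(S) ≤ Φ(S) ≤ H_n · c(S), where c(S) is the social cost of S and Φ is Rosenthal's potential. -/
open SimpleGraph
open scoped Classical

/-- A multicast network design game: a finite undirected graph with positive
edge costs, a set `U` of terminals and a root `r ∈ U`. -/
structure MGame where
  V : Type
  fV : Fintype V
  dV : DecidableEq V
  G : SimpleGraph V
  c : Sym2 V → ℝ
  cpos : ∀ e ∈ G.edgeSet, 0 < c e
  U : Finset V
  r : V
  hr : r ∈ U

attribute [instance] MGame.fV MGame.dV

namespace MGame

/-- A state: every terminal chooses a (simple) path from itself to the root. -/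
def State (M : MGame) := ∀ u : M.U, {p : M.G.Walk u.1 M.r // p.IsPath}

/-- The number of terminals whose chosen path uses edge `e`. -/
def nuse {M : MGame} (S : M.State) (e : Sym2 M.V) : ℕ :=
  (Finset.univ.filter fun u : M.U => e ∈ (S u).1.edges).card

/-- The shared cost paid by terminal `u`. -/
noncomputable def pcost {M : MGame} (S : M.State) (u : M.U) : ℝ :=
  ∑ e ∈ (S u).1.edges.toFinset, M.c e / (nuse S e : ℝ)

/-- Edges used by at least one terminal's path. -/
def usedEdges {M : MGame} (S : M.State) : Finset (Sym2 M.V) :=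
  Finset.univ.biUnion fun u : M.U => (S u).1.edges.toFinset

/-- The social cost of a state. -/
noncomputable def socialCost {M : MGame} (S : M.State) : ℝ :=
  ∑ e ∈ usedEdges S, M.c e

/-- The state obtained from `S` when terminal `u` unilaterally switches to path `w`. -/
def update {M : MGame} (S : M.State) (u : M.U) (w : {p : M.G.Walk u.1 M.r // p.IsPath}) :
    M.State :=
  fun v => if h : v = u then (by rw [h]; exact w) else S v

/-- Nash equilibrium: no terminal can strictly decrease its shared cost by
unilaterally changing its path. -/
def IsNash {M : MGame} (S : M.State) : Prop :=
  ∀ (u : M.U) (w : {p : M.G.Walk u.1 M.r // p.IsPath}),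
    pcost S u ≤ pcost (update S u w) u

/-- Rosenthal's potential. -/
noncomputable def potential {M : MGame} (S : M.State) : ℝ :=
  ∑ e : Sym2 M.V, M.c e * (harmonic (nuse S e) : ℝ)

/-- Quasi-bipartite: no edge has both endpoints nonterminals. -/
def QuasiBipartite (M : MGame) : Prop :=
  ∀ v w : M.V, M.G.Adj v w → v ∈ M.U ∨ w ∈ M.U

end MGame


lemma harm_mono' : Monotone harmonic := fun m n h => by
  unfold harmonic
  exact Finset.sum_le_sum_of_subset_of_nonneg (Finset.range_subset_range.2 h)
    (fun i _ _ => by positivity)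

lemma harm_one_le' {n : ℕ} (h : 1 ≤ n) : (1:ℚ) ≤ harmonic n := by
  have := harm_mono' h
  simpa [harmonic] using this

/-- For every state `S` of a multicast game with `n` terminals,
`c(S) ≤ Φ(S) ≤ H_n · c(S)`. -/
theorem socialCost_le_potential_le_harmonic_mul (M : MGame) (S : M.State) :
    MGame.socialCost S ≤ MGame.potential S ∧
    MGame.potential S ≤ (harmonic M.U.card : ℝ) * MGame.socialCost S := by
  classical
  have hpot : MGame.potential S =
      ∑ e ∈ MGame.usedEdges S, M.c e * (harmonic (MGame.nuse S e) : ℝ) := by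
    rw [MGame.potential]
    symm
    apply Finset.sum_subset (Finset.subset_univ _)
    intro e _ he
    have h0 : MGame.nuse S e = 0 := by
      rw [MGame.nuse, Finset.card_eq_zero, Finset.filter_eq_empty_iff]
      intro u _ hu
      exact he (Finset.mem_biUnion.2 ⟨u, Finset.mem_univ _, List.mem_toFinset.2 hu⟩)
    simp [h0, harmonic_zero]
  have hpos : ∀ e ∈ MGame.usedEdges S, 0 < M.c e := by
    intro e he
    obtain ⟨u, _, hu⟩ := Finset.mem_biUnion.1 he
    exact M.cpos e ((S u).1.edges_subset_edgeSet (List.mem_toFinset.1 hu))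
  have h1 : ∀ e ∈ MGame.usedEdges S, 1 ≤ MGame.nuse S e := by
    intro e he
    obtain ⟨u, _, hu⟩ := Finset.mem_biUnion.1 he
    rw [MGame.nuse, Nat.one_le_iff_ne_zero, Ne, Finset.card_eq_zero,
      Finset.filter_eq_empty_iff]
    push_neg
    exact ⟨u, Finset.mem_univ _, List.mem_toFinset.1 hu⟩
  have h2 : ∀ e, MGame.nuse S e ≤ M.U.card := by
    intro e
    calc MGame.nuse S e ≤ (Finset.univ : Finset M.U).card := Finset.card_filter_le _ _
      _ = M.U.card := by simp
  constructor
  · rw [hpot, MGame.socialCost]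
    apply Finset.sum_le_sum
    intro e he
    have h1' : (1:ℝ) ≤ (harmonic (MGame.nuse S e) : ℝ) := by
      exact_mod_cast harm_one_le' (h1 e he)
    exact le_mul_of_one_le_right (hpos e he).le h1'
  · rw [hpot, MGame.socialCost, Finset.mul_sum]
    apply Finset.sum_le_sum
    intro e he
    rw [mul_comm ((harmonic M.U.card : ℝ))]
    apply mul_le_mul_of_nonneg_left _ (hpos e he).le
    exact_mod_cast harm_mono' (h2 e)
end

section
/- Let k ≥ 1 be an integer, let a_1, ..., a_{k+1} be real numbers, and let b_1, ..., b_k be nonnegative real numbers. If for every i with 1 ≤ i ≤ k it holds that Σ_{j=1}^{i} (a_j − a_{i+1}) ≤ 4 Σ_{j=1}^{i} H_j · b_j, then a_1 − a_{k+1} ≤ 4 Σ_{j=1}^{k} (H_j / j) · b_j. -/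
private lemma tel_aux (a b : ℕ → ℝ) (k : ℕ) (hk : 1 ≤ k)
    (h : ∀ i, 1 ≤ i → i < k →
      ∑ j ∈ Finset.Icc 1 i, (a j - a (i + 1)) ≤
        4 * ∑ j ∈ Finset.Icc 1 i, (harmonic j : ℝ) * b j) :
    a 1 - a (k + 1) ≤
      4 * ∑ j ∈ Finset.Icc 1 k, (harmonic j : ℝ) * (1 / (j : ℝ) - 1 / (k : ℝ)) * b j
        + (∑ j ∈ Finset.Icc 1 k, (a j - a (k + 1))) / (k : ℝ) := by
  induction k, hk using Nat.le_induction with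
  | base => simp
  | succ k hk IH =>
    have hk0 : (0:ℝ) < (k:ℝ) := by exact_mod_cast hk
    have hk1 : (0:ℝ) < (k:ℝ) + 1 := by positivity
    have hIH : a 1 - a (k + 1) ≤
        4 * ∑ j ∈ Finset.Icc 1 k, (harmonic j : ℝ) * (1 / (j : ℝ) - 1 / (k : ℝ)) * b j
          + (∑ j ∈ Finset.Icc 1 k, (a j - a (k + 1))) / (k : ℝ) :=
      IH (fun i h1 h2 => h i h1 (Nat.lt_succ_of_lt h2))
    have hSC : ∑ j ∈ Finset.Icc 1 k, (a j - a (k + 1)) ≤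
        4 * ∑ j ∈ Finset.Icc 1 k, (harmonic j : ℝ) * b j := h k hk (Nat.lt_succ_self k)
    -- abbreviations
    set S := ∑ j ∈ Finset.Icc 1 k, (a j - a (k + 1)) with hS
    set C := ∑ j ∈ Finset.Icc 1 k, (harmonic j : ℝ) * b j with hC
    set E := ∑ j ∈ Finset.Icc 1 k, (harmonic j : ℝ) * (1 / (j : ℝ) - 1 / (k : ℝ)) * b j with hE
    have key1 : ∑ j ∈ Finset.Icc 1 (k + 1), (a j - a (k + 1 + 1))
        = S + ((k:ℝ) + 1) * (a (k + 1) - a (k + 1 + 1)) := by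
      rw [Finset.sum_Icc_succ_top (by omega : 1 ≤ k + 1)]
      have h1 : ∑ j ∈ Finset.Icc 1 k, (a j - a (k + 1 + 1))
          = ∑ j ∈ Finset.Icc 1 k, ((a j - a (k + 1)) + (a (k + 1) - a (k + 1 + 1))) := by
        apply Finset.sum_congr rfl; intro j _; ring
      rw [h1, Finset.sum_add_distrib, Finset.sum_const, Nat.card_Icc, ← hS]
      simp only [Nat.add_sub_cancel, nsmul_eq_mul]
      ring
    have key2 : ∑ j ∈ Finset.Icc 1 (k + 1),
          (harmonic j : ℝ) * (1 / (j : ℝ) - 1 / ((k:ℝ) + 1)) * b j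
        = E + C * (1 / (k:ℝ) - 1 / ((k:ℝ) + 1)) := by
      rw [Finset.sum_Icc_succ_top (by omega : 1 ≤ k + 1)]
      have hlast : (harmonic (k+1) : ℝ) * (1 / ((k+1 : ℕ) : ℝ) - 1 / ((k:ℝ) + 1)) * b (k+1) = 0 := by
        push_cast; ring
      rw [hlast, add_zero, hE, hC, Finset.sum_mul, ← Finset.sum_add_distrib]
      apply Finset.sum_congr rfl
      intro j hj
      ring
    have hc : (0:ℝ) ≤ 1 / (k:ℝ) - 1 / ((k:ℝ) + 1) := by
      rw [sub_nonneg]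
      apply div_le_div_of_nonneg_left (by norm_num) hk0 (by linarith)
    have hmul : S * (1 / (k:ℝ) - 1 / ((k:ℝ) + 1)) ≤ 4 * C * (1 / (k:ℝ) - 1 / ((k:ℝ) + 1)) :=
      mul_le_mul_of_nonneg_right hSC hc
    have hsplit : S / (k:ℝ) = S / ((k:ℝ) + 1) + S * (1 / (k:ℝ) - 1 / ((k:ℝ) + 1)) := by
      field_simp; ring
    push_cast
    rw [key1, key2]
    have hx : (S + ((k:ℝ) + 1) * (a (k + 1) - a (k + 1 + 1))) / ((k:ℝ) + 1)
        = S / ((k:ℝ) + 1) + (a (k + 1) - a (k + 1 + 1)) := by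
      field_simp
    rw [hx]
    have : a 1 - a (k + 1 + 1) = (a 1 - a (k + 1)) + (a (k + 1) - a (k + 1 + 1)) := by ring
    rw [this]
    linarith

/-- Let `k ≥ 1`, let `a 1, …, a (k+1)` be reals and `b 1, …, b k`
nonnegative reals.  If for every `1 ≤ i ≤ k` we have
`Σ_{j=1}^{i} (a j − a (i+1)) ≤ 4 Σ_{j=1}^{i} H_j · b j`, then
`a 1 − a (k+1) ≤ 4 Σ_{j=1}^{k} (H_j / j) · b j`. -/
theorem telescoping_harmonic_bound (k : ℕ) (hk : 1 ≤ k) (a b : ℕ → ℝ)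
    (hb : ∀ j, 1 ≤ j → j ≤ k → 0 ≤ b j)
    (h : ∀ i, 1 ≤ i → i ≤ k →
      ∑ j ∈ Finset.Icc 1 i, (a j - a (i + 1)) ≤
        4 * ∑ j ∈ Finset.Icc 1 i, (harmonic j : ℝ) * b j) :
    a 1 - a (k + 1) ≤ 4 * ∑ j ∈ Finset.Icc 1 k, (harmonic j : ℝ) / (j : ℝ) * b j := by
  have hk0 : (0:ℝ) < (k:ℝ) := by exact_mod_cast hk
  have hIH := tel_aux a b k hk (fun i h1 h2 => h i h1 (le_of_lt h2))
  have hSC := h k hk le_rfl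
  have h2 : (∑ j ∈ Finset.Icc 1 k, (a j - a (k + 1))) / (k:ℝ)
      ≤ 4 * ((∑ j ∈ Finset.Icc 1 k, (harmonic j : ℝ) * b j) / (k:ℝ)) := by
    rw [← mul_div_assoc]
    exact div_le_div_of_nonneg_right hSC hk0.le
  have key : ∑ j ∈ Finset.Icc 1 k, (harmonic j : ℝ) * (1 / (j : ℝ) - 1 / (k : ℝ)) * b j
      + (∑ j ∈ Finset.Icc 1 k, (harmonic j : ℝ) * b j) / (k:ℝ)
      = ∑ j ∈ Finset.Icc 1 k, (harmonic j : ℝ) / (j : ℝ) * b j := by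
    rw [Finset.sum_div, ← Finset.sum_add_distrib]
    apply Finset.sum_congr rfl
    intro j hj
    have hj1 : 1 ≤ j := (Finset.mem_Icc.mp hj).1
    have hjne : (j:ℝ) ≠ 0 := by positivity
    have hkne : (k:ℝ) ≠ 0 := ne_of_gt hk0
    field_simp
    ring
  linarith
end

section
/- Let α ≥ 2 and μ be natural numbers with μ ≤ α − 2, and let n_0, n_1, ..., n_{α−2} be natural numbers. If 2 · ( Σ_{γ=0}^{α−2} 256^{γ+1} · H_{n_γ}^2 + 256^{μ+1} · ( H_{n_μ + 1}^2 − H_{n_μ}^2 ) ) ≥ 256^α / 56, then there exists β with 0 ≤ β ≤ α − 2 such that 256^{β+1} · H_{n_β}^2 / 256^{α−1} ≥ 1 / 256^{(α−β)/2}. -/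
/-- Let `α ≥ 2` and `μ ≤ α − 2` be naturals and `n_0, …, n_{α−2}`
naturals.  If `2 (Σ_{γ=0}^{α−2} 256^{γ+1} H_{n_γ}² + 256^{μ+1} (H_{n_μ+1}² − H_{n_μ}²))
≥ 256^α / 56`, then there exists `β` with `0 ≤ β ≤ α − 2` such that
`256^{β+1} H_{n_β}² / 256^{α−1} ≥ 1 / 256^{(α−β)/2}` (the latter power being a real
power). -/
theorem exists_heavy_class (α μ : ℕ) (hα : 2 ≤ α) (hμ : (μ : ℤ) ≤ (α : ℤ) - 2)
    (n : ℕ → ℕ)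
    (h : (256 : ℝ) ^ α / 56 ≤
      2 * ((∑ γ ∈ Finset.range (α - 1), (256 : ℝ) ^ (γ + 1) * (harmonic (n γ) : ℝ) ^ 2) +
        (256 : ℝ) ^ (μ + 1) * ((harmonic (n μ + 1) : ℝ) ^ 2 - (harmonic (n μ) : ℝ) ^ 2))) :
    ∃ β : ℕ, (β : ℤ) ≤ (α : ℤ) - 2 ∧
      1 / (256 : ℝ) ^ (((α : ℝ) - (β : ℝ)) / 2) ≤
        (256 : ℝ) ^ (β + 1) * (harmonic (n β) : ℝ) ^ 2 / (256 : ℝ) ^ (α - 1) := by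
  obtain ⟨a, rfl⟩ : ∃ a, α = a + 2 := ⟨α - 2, by omega⟩
  have hμa : μ ≤ a := by omega
  by_contra hcon
  push_neg at hcon
  -- rpow to natural pow
  have key : ∀ k : ℕ, (256:ℝ) ^ ((k:ℝ)/2) = 16 ^ k := by
    intro k
    rw [show (256:ℝ) = (16:ℝ) ^ (2:ℝ) by
        rw [show (2:ℝ) = ((2:ℕ):ℝ) by norm_num, Real.rpow_natCast]; norm_num,
      ← Real.rpow_mul (by norm_num)]
    rw [show (2:ℝ) * ((k:ℝ)/2) = ((k:ℕ):ℝ) by ring, Real.rpow_natCast]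
  -- pointwise bound
  have hb : ∀ β : ℕ, β ≤ a → (256:ℝ)^(β+1) * (harmonic (n β):ℝ)^2 < 16 ^ (a + β) := by
    intro β hβ
    have h1 := hcon β (by push_cast; omega)
    have h2 : (((a+2:ℕ):ℝ) - (β:ℝ)) / 2 = ((a + 2 - β : ℕ):ℝ) / 2 := by
      rw [Nat.cast_sub (by omega : β ≤ a + 2)]
    rw [h2, key] at h1
    rw [div_lt_div_iff₀ (by positivity) (by positivity), one_mul] at h1
    have h4 : (256:ℝ)^(a+2-1) = 16^(a+β) * 16^(a+2-β) := by
      rw [← pow_add, show (256:ℝ) = 16^2 by norm_num, ← pow_mul]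
      congr 1; omega
    rw [h4] at h1
    exact (mul_lt_mul_iff_of_pos_right (by positivity)).mp h1
  set S := ∑ γ ∈ Finset.range (a + 2 - 1), (256:ℝ) ^ (γ + 1) * (harmonic (n γ) : ℝ) ^ 2 with hSdef
  set c := (256:ℝ) ^ a with hcdef
  have hc0 : (0:ℝ) < c := by positivity
  -- sum bound
  have hS : S ≤ 16 * c / 15 := by
    have h5 : S < ∑ γ ∈ Finset.range (a + 1), (16:ℝ) ^ (a + γ) := by
      rw [hSdef, show a + 2 - 1 = a + 1 from rfl]
      refine Finset.sum_lt_sum_of_nonempty ⟨0, Finset.mem_range.2 (by omega)⟩ ?_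
      intro γ hγ
      exact hb γ (by simpa using Nat.lt_succ_iff.mp (Finset.mem_range.mp hγ))
    have h6 : ∑ γ ∈ Finset.range (a + 1), (16:ℝ) ^ (a + γ)
        = 16^a * ((16^(a+1) - 1)/(16 - 1)) := by
      rw [← geom_sum_eq (by norm_num : (16:ℝ) ≠ 1), Finset.mul_sum]
      exact Finset.sum_congr rfl fun γ _ => (pow_add 16 a γ)
    have h7 : (16:ℝ)^a * 16^(a+1) = 16 * c := by
      rw [← pow_add, hcdef, show (256:ℝ) = 16^2 by norm_num, ← pow_mul]
      rw [show a + (a+1) = 2*a + 1 by ring, pow_succ]; ring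
    have h8 : (0:ℝ) < (16:ℝ)^a := by positivity
    nlinarith [h5, h6, h7, h8]
  -- difference bound
  have hH0 : (0:ℝ) ≤ (harmonic (n μ) : ℝ) := by
    rcases Nat.eq_zero_or_pos (n μ) with hz | hz
    · simp [hz, harmonic_zero]
    · exact_mod_cast (harmonic_pos hz.ne').le
  have hsucc : ((harmonic (n μ + 1) : ℚ) : ℝ)
      = (harmonic (n μ) : ℝ) + ((n μ : ℝ) + 1)⁻¹ := by
    rw [harmonic_succ]; push_cast; ring
  have ht1 : ((n μ : ℝ) + 1)⁻¹ ≤ 1 := by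
    rw [inv_le_one_iff₀]; right; have := Nat.cast_nonneg (n μ) (α := ℝ); linarith
  have ht0 : (0:ℝ) < ((n μ : ℝ) + 1)⁻¹ := by positivity
  have hdiff : (harmonic (n μ + 1) : ℝ)^2 - (harmonic (n μ) : ℝ)^2
      ≤ 2 * (harmonic (n μ) : ℝ) + 1 := by
    rw [hsucc]; nlinarith
  -- bound on 256^(μ+1) * H
  have hQ : (256:ℝ)^(μ+1) * (harmonic (n μ) : ℝ) < 4^(a + 3*μ + 2) := by
    have e : ((4:ℝ)^(a+3*μ+2))^2 = 256^(μ+1) * 16^(a+μ) := by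
      rw [← pow_mul, show (256:ℝ) = 4^4 by norm_num, show (16:ℝ) = 4^2 by norm_num,
        ← pow_mul, ← pow_mul, ← pow_add]
      congr 1; ring
    have hsq : ((256:ℝ)^(μ+1) * (harmonic (n μ) : ℝ))^2 < ((4:ℝ)^(a+3*μ+2))^2 := by
      calc ((256:ℝ)^(μ+1) * (harmonic (n μ) : ℝ))^2
          = 256^(μ+1) * (256^(μ+1) * (harmonic (n μ) : ℝ)^2) := by ring
        _ < 256^(μ+1) * 16^(a+μ) :=
            mul_lt_mul_of_pos_left (hb μ hμa) (by positivity)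
        _ = _ := e.symm
    exact lt_of_pow_lt_pow_left₀ 2 (by positivity) hsq
  have hp1 : (4:ℝ)^(a + 3*μ + 2) ≤ 4^(4*a + 2) :=
    pow_le_pow_right₀ (by norm_num) (by omega)
  have hp2 : (256:ℝ)^(μ+1) ≤ 256^(a+1) :=
    pow_le_pow_right₀ (by norm_num) (by omega)
  have hE : (256:ℝ)^(μ+1) * ((harmonic (n μ + 1) : ℝ)^2 - (harmonic (n μ) : ℝ)^2)
      ≤ 2 * 4^(4*a + 2) + 256^(a+1) := by
    have := mul_le_mul_of_nonneg_left hdiff (by positivity : (0:ℝ) ≤ (256:ℝ)^(μ+1))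
    nlinarith [hQ, hp1, hp2]
  -- convert powers to c
  have e2 : (4:ℝ)^(4*a + 2) = 16 * c := by
    rw [pow_add, pow_mul, hcdef]; norm_num; ring
  have e3 : (256:ℝ)^(a+1) = 256 * c := by rw [pow_succ, hcdef]; ring
  have e4 : (256:ℝ)^(a+2) = 65536 * c := by
    rw [pow_add, hcdef]; norm_num; ring
  rw [e4] at h
  rw [e2, e3] at hE
  linarith [h, hS, hE, hc0]
end

section
/- Let S be a state of a multicast game on a quasi-bipartite graph. If S is not a Nash equilibrium, then there exists a terminal q with a strictly improving deviation of one of the following two forms: (i) q's new path consists of a single edge (q, w), where w is a terminal, followed by w's current path p_w(S); or (ii) q's new path consists of an edge (q, b), where b is a nonterminal, followed by an edge (b, w), where w is a terminal, followed by w's current path p_w(S). -/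
open SimpleGraph
open scoped Classical

namespace MCAux

variable {M : MGame} (S : M.State)

/-- Number of terminals other than `u` using edge `e`. -/
noncomputable def oth (u : M.U) (e : Sym2 M.V) : ℕ :=
  ((Finset.univ.filter fun v : M.U => e ∈ (S v).1.edges).erase u).card

lemma nuse_eq_oth_add_one {u : M.U} {e : Sym2 M.V} (he : e ∈ (S u).1.edges) :
    MGame.nuse S e = oth S u e + 1 := by
  classical
  unfold MGame.nuse oth
  rw [Finset.card_erase_add_one]
  simp [he]

lemma oth_eq_nuse {u : M.U} {e : Sym2 M.V} (he : e ∉ (S u).1.edges) :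
    oth S u e = MGame.nuse S e := by
  classical
  unfold MGame.nuse oth
  rw [Finset.erase_eq_of_notMem]
  simp [he]

lemma oth_le_nuse (u : M.U) (e : Sym2 M.V) : oth S u e ≤ MGame.nuse S e :=
  Finset.card_le_card (Finset.erase_subset _ _)

lemma nuse_le_oth_add_one (u : M.U) (e : Sym2 M.V) :
    MGame.nuse S e ≤ oth S u e + 1 := by
  by_cases he : e ∈ (S u).1.edges
  · exact (nuse_eq_oth_add_one S he).le
  · rw [oth_eq_nuse S he]; omega

lemma update_self (u : M.U) (w : {p : M.G.Walk u.1 M.r // p.IsPath}) :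
    (MGame.update S u w) u = w := by
  simp [MGame.update]

lemma nuse_update (u : M.U) (w : {p : M.G.Walk u.1 M.r // p.IsPath}) {e : Sym2 M.V}
    (he : e ∈ w.1.edges) :
    MGame.nuse (MGame.update S u w) e = oth S u e + 1 := by
  classical
  unfold MGame.nuse oth
  have hset : (Finset.univ.filter fun v : M.U => e ∈ ((MGame.update S u w) v).1.edges)
      = insert u ((Finset.univ.filter fun v : M.U => e ∈ (S v).1.edges).erase u) := by
    ext v
    by_cases hv : v = u
    · subst hv
      simp [update_self S v w, he]
    · have hvv : (MGame.update S u w) v = S v := dif_neg hv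
      simp [hvv, hv]
  rw [hset, Finset.card_insert_of_notMem (Finset.notMem_erase _ _)]

/-- cost of a deviation `ρ` by `u`, in terms of `oth`. -/
noncomputable def dc (u : M.U) {a : M.V} (ρ : M.G.Walk a M.r) : ℝ :=
  ∑ e ∈ ρ.edges.toFinset, M.c e / ((oth S u e : ℝ) + 1)

lemma pcost_update (u : M.U) (w : {p : M.G.Walk u.1 M.r // p.IsPath}) :
    MGame.pcost (MGame.update S u w) u = dc S u w.1 := by
  unfold MGame.pcost dc
  rw [update_self S u w]
  refine Finset.sum_congr rfl fun e he => ?_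
  rw [nuse_update S u w (List.mem_toFinset.mp he)]
  push_cast
  ring_nf

lemma pcost_eq (u : M.U) : MGame.pcost S u = dc S u (S u).1 := by
  unfold MGame.pcost dc
  refine Finset.sum_congr rfl fun e he => ?_
  rw [nuse_eq_oth_add_one S (List.mem_toFinset.mp he)]
  push_cast
  ring_nf

/-- the measure used in the minimal-counterexample argument -/
noncomputable def nuF (A : Finset (Sym2 M.V)) : ℝ :=
  ∑ e ∈ A, M.c e / ((max (MGame.nuse S e) 1 : ℕ) : ℝ)

lemma cpos_of_walk {a b : M.V} (ρ : M.G.Walk a b) {e : Sym2 M.V} (he : e ∈ ρ.edges) :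
    0 < M.c e :=
  M.cpos e (ρ.edges_subset_edgeSet he)

lemma dc_nonneg (u : M.U) {a : M.V} (ρ : M.G.Walk a M.r) : 0 ≤ dc S u ρ := by
  refine Finset.sum_nonneg fun e he => ?_
  have hc := cpos_of_walk ρ (List.mem_toFinset.mp he)
  have h0 : (0:ℝ) < (oth S u e : ℝ) + 1 := by positivity
  positivity

/-- The core comparison lemma. -/
lemma core (t : M.U) (σ : M.G.Walk t.1 M.r) {a : M.V} (θ : M.G.Walk a M.r)
    (hθ : ∀ e ∈ θ.edges, e ∈ (S t).1.edges)
    (hT : MGame.pcost S t ≤ dc S t σ)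
    (d : Sym2 M.V → ℝ) (hd0 : ∀ e, 0 < d e)
    (hd1 : ∀ e ∈ (S t).1.edges, ((oth S t e : ℝ) + 1) ≤ d e)
    (hd2 : ∀ e, e ∉ (S t).1.edges → d e ≤ (oth S t e : ℝ) + 1) :
    ∑ e ∈ θ.edges.toFinset, M.c e / d e ≤ ∑ e ∈ σ.edges.toFinset, M.c e / d e := by
  classical
  set P := (S t).1.edges.toFinset with hP
  set A := σ.edges.toFinset with hA
  set B := θ.edges.toFinset with hB
  set H : Sym2 M.V → ℝ := fun e => M.c e / ((oth S t e : ℝ) + 1) with hH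
  set F : Sym2 M.V → ℝ := fun e => M.c e / d e with hF
  have hBP : B ⊆ P := fun e he =>
    List.mem_toFinset.mpr (hθ e (List.mem_toFinset.mp he))
  have hcP : ∀ e ∈ P, 0 < M.c e := fun e he =>
    cpos_of_walk (S t).1 (List.mem_toFinset.mp he)
  have hcA : ∀ e ∈ A, 0 < M.c e := fun e he =>
    cpos_of_walk σ (List.mem_toFinset.mp he)
  have hothpos : ∀ e : Sym2 M.V, (0:ℝ) < (oth S t e : ℝ) + 1 := by
    intro e; positivity
  have hH0 : ∀ e ∈ P, 0 ≤ H e := fun e he => by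
    have h1 := hcP e he; have h2 := hothpos e; simp only [hH]; positivity
  have hF0A : ∀ e ∈ A, 0 ≤ F e := fun e he => by
    have h1 := hcA e he; have h2 := hd0 e; simp only [hF]; positivity
  have hPH : MGame.pcost S t = ∑ e ∈ P, H e := pcost_eq S t
  have hAH : dc S t σ = ∑ e ∈ A, H e := rfl
  have hTH : ∑ e ∈ P, H e ≤ ∑ e ∈ A, H e := by rw [← hPH, ← hAH]; exact hT
  have h1 : ∑ e ∈ B ∩ A, F e ≤ ∑ e ∈ A ∩ P, F e := by
    refine Finset.sum_le_sum_of_subset_of_nonneg ?_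
      (fun e he _ => hF0A e (Finset.mem_inter.mp he).1)
    intro e he
    rw [Finset.mem_inter] at he ⊢
    exact ⟨he.2, hBP he.1⟩
  have h2 : ∑ e ∈ B \ A, F e ≤ ∑ e ∈ A \ P, F e := by
    have c1 : ∑ e ∈ B \ A, F e ≤ ∑ e ∈ B \ A, H e := by
      refine Finset.sum_le_sum fun e he => ?_
      have heP : e ∈ P := hBP (Finset.mem_sdiff.mp he).1
      have hce := hcP e heP
      have hde := hd1 e (List.mem_toFinset.mp heP)
      simp only [hF, hH]
      exact div_le_div_of_nonneg_left hce.le (hothpos e) hde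
    have c2 : ∑ e ∈ B \ A, H e ≤ ∑ e ∈ P \ A, H e := by
      refine Finset.sum_le_sum_of_subset_of_nonneg ?_
        (fun e he _ => hH0 e (Finset.mem_sdiff.mp he).1)
      intro e he
      rw [Finset.mem_sdiff] at he ⊢
      exact ⟨hBP he.1, he.2⟩
    have c3 : ∑ e ∈ P ∩ A, H e + ∑ e ∈ P \ A, H e = ∑ e ∈ P, H e :=
      Finset.sum_inter_add_sum_sdiff P A H
    have c5 : ∑ e ∈ A ∩ P, H e + ∑ e ∈ A \ P, H e = ∑ e ∈ A, H e :=
      Finset.sum_inter_add_sum_sdiff A P H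
    have c6 : ∑ e ∈ P ∩ A, H e = ∑ e ∈ A ∩ P, H e := by rw [Finset.inter_comm]
    have c7 : ∑ e ∈ A \ P, H e ≤ ∑ e ∈ A \ P, F e := by
      refine Finset.sum_le_sum fun e he => ?_
      rw [Finset.mem_sdiff] at he
      have hce := hcA e he.1
      have hde := hd2 e (fun hmem => he.2 (List.mem_toFinset.mpr hmem))
      simp only [hF, hH]
      exact div_le_div_of_nonneg_left hce.le (hd0 e) hde
    linarith
  have hBsplit : ∑ e ∈ B ∩ A, F e + ∑ e ∈ B \ A, F e = ∑ e ∈ B, F e :=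
    Finset.sum_inter_add_sum_sdiff B A F
  have hAsplit : ∑ e ∈ A ∩ P, F e + ∑ e ∈ A \ P, F e = ∑ e ∈ A, F e :=
    Finset.sum_inter_add_sum_sdiff A P F
  linarith

/-- core specialised to the deviation cost of `u`. -/
lemma core_dc (t u : M.U) (σ : M.G.Walk t.1 M.r) {a : M.V} (θ : M.G.Walk a M.r)
    (hθ : ∀ e ∈ θ.edges, e ∈ (S t).1.edges)
    (hT : MGame.pcost S t ≤ dc S t σ) :
    dc S u θ ≤ dc S u σ := by
  refine core S t σ θ hθ hT _ (fun e => by positivity) (fun e he => ?_) (fun e he => ?_)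
  · have h1 : MGame.nuse S e = oth S t e + 1 := nuse_eq_oth_add_one S he
    have h2 : MGame.nuse S e ≤ oth S u e + 1 := nuse_le_oth_add_one S u e
    have : oth S t e + 1 ≤ oth S u e + 1 := by omega
    exact_mod_cast this
  · have h1 : oth S u e ≤ MGame.nuse S e := oth_le_nuse S u e
    have h2 : oth S t e = MGame.nuse S e := oth_eq_nuse S he
    have : oth S u e + 1 ≤ oth S t e + 1 := by omega
    exact_mod_cast this

/-- core specialised to the measure `nuF`. -/
lemma core_nu (t : M.U) (σ : M.G.Walk t.1 M.r) {a : M.V} (θ : M.G.Walk a M.r)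
    (hθ : ∀ e ∈ θ.edges, e ∈ (S t).1.edges)
    (hT : MGame.pcost S t ≤ dc S t σ) :
    nuF S θ.edges.toFinset ≤ nuF S σ.edges.toFinset := by
  refine core S t σ θ hθ hT _ (fun e => ?_) (fun e he => ?_) (fun e he => ?_)
  · have : 0 < max (MGame.nuse S e) 1 := by omega
    exact_mod_cast this
  · have h1 : MGame.nuse S e = oth S t e + 1 := nuse_eq_oth_add_one S he
    have : oth S t e + 1 ≤ max (MGame.nuse S e) 1 := by omega
    exact_mod_cast this
  · have h2 : oth S t e = MGame.nuse S e := oth_eq_nuse S he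
    have : max (MGame.nuse S e) 1 ≤ oth S t e + 1 := by omega
    exact_mod_cast this

lemma cpos_adj {a b : M.V} (h : M.G.Adj a b) : 0 < M.c s(a, b) :=
  M.cpos _ ((SimpleGraph.mem_edgeSet M.G).mpr h)

lemma term_pos (u : M.U) {a b : M.V} (h : M.G.Adj a b) :
    0 < M.c s(a, b) / ((oth S u s(a, b) : ℝ) + 1) := by
  have h1 := cpos_adj (M := M) h
  have h2 : (0:ℝ) < (oth S u s(a, b) : ℝ) + 1 := by positivity
  positivity

lemma nuterm_pos {a b : M.V} (h : M.G.Adj a b) :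
    0 < M.c s(a, b) / ((max (MGame.nuse S s(a, b)) 1 : ℕ) : ℝ) := by
  have h1 := cpos_adj (M := M) h
  have h2 : (0:ℝ) < ((max (MGame.nuse S s(a, b)) 1 : ℕ) : ℝ) := by
    have : 0 < max (MGame.nuse S s(a, b)) 1 := by omega
    exact_mod_cast this
  positivity

lemma dc_cons (u : M.U) {a b : M.V} (h : M.G.Adj a b) (ρ : M.G.Walk b M.r)
    (hne : s(a, b) ∉ ρ.edges) :
    dc S u (SimpleGraph.Walk.cons h ρ) =
      M.c s(a, b) / ((oth S u s(a, b) : ℝ) + 1) + dc S u ρ := by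
  unfold dc
  rw [SimpleGraph.Walk.edges_cons, List.toFinset_cons,
    Finset.sum_insert (by simpa using hne)]

lemma nuF_cons {a b : M.V} (h : M.G.Adj a b) (ρ : M.G.Walk b M.r)
    (hne : s(a, b) ∉ ρ.edges) :
    nuF S (SimpleGraph.Walk.cons h ρ).edges.toFinset =
      M.c s(a, b) / ((max (MGame.nuse S s(a, b)) 1 : ℕ) : ℝ) + nuF S ρ.edges.toFinset := by
  unfold nuF
  rw [SimpleGraph.Walk.edges_cons, List.toFinset_cons,
    Finset.sum_insert (by simpa using hne)]

end MCAux


/-- In a multicast game on a quasi-bipartite graph, if a state `S`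
is not a Nash equilibrium then some terminal `q` has a strictly improving deviation
that either (i) consists of a single edge `(q, w)` to a terminal `w` followed by `w`'s
current path, or (ii) consists of an edge `(q, b)` to a nonterminal `b`, an edge
`(b, w)` to a terminal `w`, followed by `w`'s current path. -/
theorem improving_move_safe_or_critical (M : MGame) (hqb : M.QuasiBipartite)
    (S : M.State) (h : ¬ MGame.IsNash S) :
    ∃ (q : M.U) (w : {p : M.G.Walk q.1 M.r // p.IsPath}),
      MGame.pcost (MGame.update S q w) q < MGame.pcost S q ∧
      ((∃ (t : M.U) (hadj : M.G.Adj q.1 t.1), w.1 = SimpleGraph.Walk.cons hadj (S t).1) ∨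
       (∃ (b : M.V) (t : M.U), b ∉ M.U ∧
          ∃ (h1 : M.G.Adj q.1 b) (h2 : M.G.Adj b t.1),
            w.1 = SimpleGraph.Walk.cons h1 (SimpleGraph.Walk.cons h2 (S t).1))) := by
  classical
  unfold MGame.IsNash at h
  push_neg at h
  obtain ⟨u₀, w₀, hw₀⟩ := h
  -- the measure ν is valued in a finite set of reals
  have memim : ∀ {a : M.V} (ρ : M.G.Walk a M.r),
      MCAux.nuF S ρ.edges.toFinset ∈ (M.G.edgeFinset.powerset.image (MCAux.nuF S)) := by
    intro a ρ
    refine Finset.mem_image_of_mem _ ?_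
    rw [Finset.mem_powerset]
    intro e he
    rw [SimpleGraph.mem_edgeFinset]
    exact ρ.edges_subset_edgeSet (List.mem_toFinset.mp he)
  set Fs : Finset ℝ := (M.G.edgeFinset.powerset.image (MCAux.nuF S)).filter
      (fun x => ∃ (u : M.U) (w : {p : M.G.Walk u.1 M.r // p.IsPath}),
        MGame.pcost (MGame.update S u w) u < MGame.pcost S u ∧
        MCAux.nuF S w.1.edges.toFinset = x) with hFs
  have hmem : ∀ (u : M.U) (w : {p : M.G.Walk u.1 M.r // p.IsPath}),
      MGame.pcost (MGame.update S u w) u < MGame.pcost S u →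
      MCAux.nuF S w.1.edges.toFinset ∈ Fs := by
    intro u w hw
    exact Finset.mem_filter.mpr ⟨memim _, u, w, hw, rfl⟩
  have hne : Fs.Nonempty := ⟨_, hmem u₀ w₀ hw₀⟩
  have hminmem : Fs.min' hne ∈ Fs := Fs.min'_mem hne
  obtain ⟨-, u, w, himp, hweq⟩ := Finset.mem_filter.mp hminmem
  have hmin : ∀ (u' : M.U) (w' : {p : M.G.Walk u'.1 M.r // p.IsPath}),
      MGame.pcost (MGame.update S u' w') u' < MGame.pcost S u' →
      MCAux.nuF S w.1.edges.toFinset ≤ MCAux.nuF S w'.1.edges.toFinset := by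
    intro u' w' h'
    rw [hweq]
    exact Fs.min'_le _ (hmem u' w' h')
  have himp' : MCAux.dc S u w.1 < MGame.pcost S u := by
    rwa [MCAux.pcost_update] at himp
  by_cases hur : (u : M.V) = M.r
  · exfalso
    have hnil : (S u).1.copy hur rfl = SimpleGraph.Walk.nil := by
      rw [← SimpleGraph.Walk.isPath_iff_eq_nil]
      exact (SimpleGraph.Walk.isPath_copy _ _ _).mpr (S u).2
    have hedges : (S u).1.edges = [] := by
      have h2 := congrArg SimpleGraph.Walk.edges hnil
      rwa [SimpleGraph.Walk.edges_copy] at h2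
    have h0 : MGame.pcost S u = 0 := by
      unfold MGame.pcost
      rw [hedges]
      simp
    have h3 := MCAux.dc_nonneg S u w.1
    linarith
  obtain ⟨v₁, h₀, ρ₁, hρ⟩ := SimpleGraph.Walk.exists_eq_cons_of_ne hur w.1
  have hρp : (SimpleGraph.Walk.cons h₀ ρ₁).IsPath := hρ ▸ w.2
  by_cases hv₁ : v₁ ∈ M.U
  -- ============ Case 1 : one edge prefix ============
  · set t : M.U := ⟨v₁, hv₁⟩ with ht
    have hσp : ρ₁.IsPath := hρp.of_cons
    have hnd := hρp.edges_nodup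
    rw [SimpleGraph.Walk.edges_cons, List.nodup_cons] at hnd
    have hdcρ : MCAux.dc S u w.1 =
        M.c s(u.1, v₁) / ((MCAux.oth S u s(u.1, v₁) : ℝ) + 1) + MCAux.dc S u ρ₁ := by
      rw [hρ]
      exact MCAux.dc_cons S u h₀ ρ₁ hnd.1
    have hnρ : MCAux.nuF S w.1.edges.toFinset =
        M.c s(u.1, v₁) / ((max (MGame.nuse S s(u.1, v₁)) 1 : ℕ) : ℝ) +
          MCAux.nuF S ρ₁.edges.toFinset := by
      rw [hρ]
      exact MCAux.nuF_cons S h₀ ρ₁ hnd.1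
    have hA : 0 < M.c s(u.1, v₁) / ((MCAux.oth S u s(u.1, v₁) : ℝ) + 1) :=
      MCAux.term_pos S u h₀
    have hνA : 0 < M.c s(u.1, v₁) / ((max (MGame.nuse S s(u.1, v₁)) 1 : ℕ) : ℝ) :=
      MCAux.nuterm_pos S h₀
    by_cases hB1 : MGame.pcost (MGame.update S t ⟨ρ₁, hσp⟩) t < MGame.pcost S t
    · exfalso
      have h1 := hmin t ⟨ρ₁, hσp⟩ hB1
      rw [hnρ] at h1
      linarith
    · push_neg at hB1
      have hT : MGame.pcost S t ≤ MCAux.dc S t ρ₁ := by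
        rwa [MCAux.pcost_update] at hB1
      by_cases hsup : (u : M.V) ∈ (S t).1.support
      · exfalso
        have hτp : ((S t).1.dropUntil u.1 hsup).IsPath := (S t).2.dropUntil hsup
        have hτe : ∀ e ∈ ((S t).1.dropUntil u.1 hsup).edges, e ∈ (S t).1.edges :=
          fun e he => SimpleGraph.Walk.edges_dropUntil_subset _ _ he
        have hdcτ : MCAux.dc S u ((S t).1.dropUntil u.1 hsup) ≤ MCAux.dc S u ρ₁ :=
          MCAux.core_dc S t u ρ₁ _ hτe hT
        have himpτ : MGame.pcost (MGame.update S u ⟨_, hτp⟩) u < MGame.pcost S u := by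
          rw [MCAux.pcost_update]
          have : MCAux.dc S u ((S t).1.dropUntil u.1 hsup) < MCAux.dc S u w.1 := by
            rw [hdcρ]; linarith
          linarith
        have h1 := hmin u ⟨_, hτp⟩ himpτ
        have h2 : MCAux.nuF S ((S t).1.dropUntil u.1 hsup).edges.toFinset ≤
            MCAux.nuF S ρ₁.edges.toFinset := MCAux.core_nu S t ρ₁ _ hτe hT
        rw [hnρ] at h1
        linarith
      · -- good case : safe move
        have hp₁ : (SimpleGraph.Walk.cons h₀ (S t).1).IsPath :=
          (SimpleGraph.Walk.cons_isPath_iff _ _).mpr ⟨(S t).2, hsup⟩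
        refine ⟨u, ⟨SimpleGraph.Walk.cons h₀ (S t).1, hp₁⟩, ?_, Or.inl ⟨t, h₀, rfl⟩⟩
        rw [MCAux.pcost_update]
        have hnd₁ := hp₁.edges_nodup
        rw [SimpleGraph.Walk.edges_cons, List.nodup_cons] at hnd₁
        have hdl : MCAux.dc S u (SimpleGraph.Walk.cons h₀ (S t).1) =
            M.c s(u.1, v₁) / ((MCAux.oth S u s(u.1, v₁) : ℝ) + 1) + MCAux.dc S u (S t).1 :=
          MCAux.dc_cons S u h₀ (S t).1 hnd₁.1
        have hcore : MCAux.dc S u (S t).1 ≤ MCAux.dc S u ρ₁ :=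
          MCAux.core_dc S t u ρ₁ (S t).1 (fun e he => he) hT
        rw [hdl]
        have : MCAux.dc S u w.1 < MGame.pcost S u := himp'
        rw [hdcρ] at this
        linarith
  -- ============ Case 2 : two edge prefix ============
  · have hbr : v₁ ≠ M.r := fun hh => hv₁ (hh ▸ M.hr)
    obtain ⟨v₂, h₁, ρ₂, hρ₁⟩ := SimpleGraph.Walk.exists_eq_cons_of_ne hbr ρ₁
    subst hρ₁
    have hv₂ : v₂ ∈ M.U := (hqb v₁ v₂ h₁).resolve_left hv₁
    set t : M.U := ⟨v₂, hv₂⟩ with ht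
    have hσp : ρ₂.IsPath := hρp.of_cons.of_cons
    have hnd := hρp.edges_nodup
    rw [SimpleGraph.Walk.edges_cons, SimpleGraph.Walk.edges_cons, List.nodup_cons,
      List.nodup_cons, List.mem_cons] at hnd
    -- hnd : (¬(e₀ = e₁ ∨ e₀ ∈ ρ₂.edges)) ∧ (e₁ ∉ ρ₂.edges ∧ ρ₂.edges.Nodup)
    have hnd1 : (SimpleGraph.Walk.cons h₁ ρ₂).edges.Nodup := by
      rw [SimpleGraph.Walk.edges_cons, List.nodup_cons]
      exact hnd.2
    have he₀ : s(u.1, v₁) ∉ (SimpleGraph.Walk.cons h₁ ρ₂).edges := by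
      rw [SimpleGraph.Walk.edges_cons, List.mem_cons]
      exact hnd.1
    have hdcρ : MCAux.dc S u w.1 =
        M.c s(u.1, v₁) / ((MCAux.oth S u s(u.1, v₁) : ℝ) + 1) +
          (M.c s(v₁, v₂) / ((MCAux.oth S u s(v₁, v₂) : ℝ) + 1) + MCAux.dc S u ρ₂) := by
      rw [hρ, MCAux.dc_cons S u h₀ _ he₀, MCAux.dc_cons S u h₁ ρ₂ hnd.2.1]
    have hnρ : MCAux.nuF S w.1.edges.toFinset =
        M.c s(u.1, v₁) / ((max (MGame.nuse S s(u.1, v₁)) 1 : ℕ) : ℝ) +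
          (M.c s(v₁, v₂) / ((max (MGame.nuse S s(v₁, v₂)) 1 : ℕ) : ℝ) +
            MCAux.nuF S ρ₂.edges.toFinset) := by
      rw [hρ, MCAux.nuF_cons S h₀ _ he₀, MCAux.nuF_cons S h₁ ρ₂ hnd.2.1]
    have hA₀ : 0 < M.c s(u.1, v₁) / ((MCAux.oth S u s(u.1, v₁) : ℝ) + 1) :=
      MCAux.term_pos S u h₀
    have hA₁ : 0 < M.c s(v₁, v₂) / ((MCAux.oth S u s(v₁, v₂) : ℝ) + 1) :=
      MCAux.term_pos S u h₁
    have hνA₀ : 0 < M.c s(u.1, v₁) / ((max (MGame.nuse S s(u.1, v₁)) 1 : ℕ) : ℝ) :=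
      MCAux.nuterm_pos S h₀
    have hνA₁ : 0 < M.c s(v₁, v₂) / ((max (MGame.nuse S s(v₁, v₂)) 1 : ℕ) : ℝ) :=
      MCAux.nuterm_pos S h₁
    by_cases hB1 : MGame.pcost (MGame.update S t ⟨ρ₂, hσp⟩) t < MGame.pcost S t
    · exfalso
      have h1 := hmin t ⟨ρ₂, hσp⟩ hB1
      rw [hnρ] at h1
      linarith
    · push_neg at hB1
      have hT : MGame.pcost S t ≤ MCAux.dc S t ρ₂ := by
        rwa [MCAux.pcost_update] at hB1
      by_cases hsupu : (u : M.V) ∈ (S t).1.support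
      · exfalso
        have hτp : ((S t).1.dropUntil u.1 hsupu).IsPath := (S t).2.dropUntil hsupu
        have hτe : ∀ e ∈ ((S t).1.dropUntil u.1 hsupu).edges, e ∈ (S t).1.edges :=
          fun e he => SimpleGraph.Walk.edges_dropUntil_subset _ _ he
        have hdcτ : MCAux.dc S u ((S t).1.dropUntil u.1 hsupu) ≤ MCAux.dc S u ρ₂ :=
          MCAux.core_dc S t u ρ₂ _ hτe hT
        have himpτ : MGame.pcost (MGame.update S u ⟨_, hτp⟩) u < MGame.pcost S u := by
          rw [MCAux.pcost_update]
          have : MCAux.dc S u ((S t).1.dropUntil u.1 hsupu) < MCAux.dc S u w.1 := by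
            rw [hdcρ]; linarith
          linarith
        have h1 := hmin u ⟨_, hτp⟩ himpτ
        have h2 : MCAux.nuF S ((S t).1.dropUntil u.1 hsupu).edges.toFinset ≤
            MCAux.nuF S ρ₂.edges.toFinset := MCAux.core_nu S t ρ₂ _ hτe hT
        rw [hnρ] at h1
        linarith
      · by_cases hsupb : v₁ ∈ (S t).1.support
        · exfalso
          have hτp : ((S t).1.dropUntil v₁ hsupb).IsPath := (S t).2.dropUntil hsupb
          have hp₂ : (SimpleGraph.Walk.cons h₀ ((S t).1.dropUntil v₁ hsupb)).IsPath := by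
            refine (SimpleGraph.Walk.cons_isPath_iff _ _).mpr ⟨hτp, fun hh => hsupu ?_⟩
            exact SimpleGraph.Walk.support_dropUntil_subset _ _ hh
          have hnd₂ := hp₂.edges_nodup
          rw [SimpleGraph.Walk.edges_cons, List.nodup_cons] at hnd₂
          have hdcp₂ : MCAux.dc S u (SimpleGraph.Walk.cons h₀ ((S t).1.dropUntil v₁ hsupb)) =
              M.c s(u.1, v₁) / ((MCAux.oth S u s(u.1, v₁) : ℝ) + 1) +
                MCAux.dc S u ((S t).1.dropUntil v₁ hsupb) :=
            MCAux.dc_cons S u h₀ _ hnd₂.1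
          have hτe : ∀ e ∈ ((S t).1.dropUntil v₁ hsupb).edges, e ∈ (S t).1.edges :=
            fun e he => SimpleGraph.Walk.edges_dropUntil_subset _ _ he
          have hdcτ : MCAux.dc S u ((S t).1.dropUntil v₁ hsupb) ≤ MCAux.dc S u ρ₂ :=
            MCAux.core_dc S t u ρ₂ _ hτe hT
          have himpτ : MGame.pcost (MGame.update S u ⟨_, hp₂⟩) u < MGame.pcost S u := by
            rw [MCAux.pcost_update]
            have : MCAux.dc S u (SimpleGraph.Walk.cons h₀ ((S t).1.dropUntil v₁ hsupb)) <
                MCAux.dc S u w.1 := by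
              rw [hdcρ, hdcp₂]; linarith
            linarith
          have h1 := hmin u ⟨_, hp₂⟩ himpτ
          have h2 : MCAux.nuF S ((S t).1.dropUntil v₁ hsupb).edges.toFinset ≤
              MCAux.nuF S ρ₂.edges.toFinset := MCAux.core_nu S t ρ₂ _ hτe hT
          have hνp₂ : MCAux.nuF S
              (SimpleGraph.Walk.cons h₀ ((S t).1.dropUntil v₁ hsupb)).edges.toFinset =
              M.c s(u.1, v₁) / ((max (MGame.nuse S s(u.1, v₁)) 1 : ℕ) : ℝ) +
                MCAux.nuF S ((S t).1.dropUntil v₁ hsupb).edges.toFinset :=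
            MCAux.nuF_cons S h₀ _ hnd₂.1
          rw [hnρ] at h1
          rw [hνp₂] at h1
          linarith
        · -- good case : critical move
          have hinner : (SimpleGraph.Walk.cons h₁ (S t).1).IsPath :=
            (SimpleGraph.Walk.cons_isPath_iff _ _).mpr ⟨(S t).2, hsupb⟩
          have hp₁ : (SimpleGraph.Walk.cons h₀ (SimpleGraph.Walk.cons h₁ (S t).1)).IsPath := by
            refine (SimpleGraph.Walk.cons_isPath_iff _ _).mpr ⟨hinner, ?_⟩
            rw [SimpleGraph.Walk.support_cons, List.mem_cons]
            rintro (hh | hh)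
            · exact hv₁ (hh ▸ u.2)
            · exact hsupu hh
          refine ⟨u, ⟨SimpleGraph.Walk.cons h₀ (SimpleGraph.Walk.cons h₁ (S t).1), hp₁⟩, ?_,
            Or.inr ⟨v₁, t, hv₁, h₀, h₁, rfl⟩⟩
          rw [MCAux.pcost_update]
          have hnd₁ := hp₁.edges_nodup
          rw [SimpleGraph.Walk.edges_cons, SimpleGraph.Walk.edges_cons, List.nodup_cons,
            List.nodup_cons, List.mem_cons] at hnd₁
          have he₀' : s(u.1, v₁) ∉ (SimpleGraph.Walk.cons h₁ (S t).1).edges := by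
            rw [SimpleGraph.Walk.edges_cons, List.mem_cons]
            exact hnd₁.1
          have hdl : MCAux.dc S u (SimpleGraph.Walk.cons h₀ (SimpleGraph.Walk.cons h₁ (S t).1)) =
              M.c s(u.1, v₁) / ((MCAux.oth S u s(u.1, v₁) : ℝ) + 1) +
                (M.c s(v₁, v₂) / ((MCAux.oth S u s(v₁, v₂) : ℝ) + 1) +
                  MCAux.dc S u (S t).1) := by
            rw [MCAux.dc_cons S u h₀ _ he₀', MCAux.dc_cons S u h₁ (S t).1 hnd₁.2.1]
          have hcore : MCAux.dc S u (S t).1 ≤ MCAux.dc S u ρ₂ :=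
            MCAux.core_dc S t u ρ₂ (S t).1 (fun e he => he) hT
          rw [hdl]
          have hlt : MCAux.dc S u w.1 < MGame.pcost S u := himp'
          rw [hdcρ] at hlt
          linarith
end

section
/- Let S be a state of a multicast game on a quasi-bipartite graph whose union of chosen paths forms a tree containing r, and suppose every nonterminal vertex of this tree lies on the path of at least one terminal. For each non-root vertex v of the tree, let e_v be the first edge of v's path toward r (the tree edge from v to its parent). Let E_σ = { e_v : v is a nonterminal in the tree and low(e_v)/64 ≤ c(σ_v) }. Then Σ_{e ∈ E_σ} c(e) ≤ 16384 · Σ_{e ∈ S \ E_σ} c(e); in particular c(E_σ) = O( c(S \ E_σ) ). -/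
open SimpleGraph
open scoped Classical

namespace MGame

/-- Assuming all edge costs are at least 1, `elow M e = 256 ^ class(e)`, where
`class(e)` is the unique natural number `α` with `256 ^ α ≤ c(e) < 256 ^ (α+1)`. -/
noncomputable def elow (M : MGame) (e : Sym2 M.V) : ℝ :=
  (256 : ℝ) ^ (Nat.log 256 ⌊M.c e⌋₊)

end MGame

private lemma walk_edge_aux' {V : Type*} {G : SimpleGraph V} {a b : V} (p : G.Walk a b) (i : ℕ)
    (hi : i + 1 < p.support.length) : s(p.support[i], p.support[i+1]) ∈ p.edges := by
  induction p generalizing i with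
  | nil => simp at hi
  | @cons u v w h q ih =>
    cases i with
    | zero =>
      have h0 : (SimpleGraph.Walk.cons h q).support[0] = u := rfl
      have h1 : (SimpleGraph.Walk.cons h q).support[0+1]'hi = v := by
        show q.support[0]'_ = v
        rw [List.getElem_of_eq q.support_eq_cons]; rfl
      rw [h0, h1]
      simp
    | succ n =>
      simp only [SimpleGraph.Walk.support_cons, List.getElem_cons_succ,
        SimpleGraph.Walk.edges_cons, List.mem_cons]
      right
      exact ih n (by simpa [SimpleGraph.Walk.support_cons] using hi)

private lemma used_sub_edgeSet' {M : MGame} (S : M.State) :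
    ∀ e ∈ MGame.usedEdges S, e ∈ M.G.edgeSet := by
  intro e he
  rw [MGame.usedEdges, Finset.mem_biUnion] at he
  obtain ⟨u, -, he⟩ := he
  rw [List.mem_toFinset] at he
  exact (S u).1.edges_subset_edgeSet he

/-- Let `S` be a state of a multicast game on a quasi-bipartite
graph whose union of chosen paths forms a tree containing `r` (encoded by a
consistent parent map: along every terminal's path each vertex is followed by its
parent), with every nonterminal of the tree on some terminal's path (automatic
here, as the tree vertices are exactly the vertices on the chosen paths).  For a
non-root vertex `v` of the tree, `e_v = s(v, parent v)` is the first edge of `v`'s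
path toward `r`, and `σ v` is a minimum-cost edge of `G` incident to `v`.  Let
`E_σ = { e_v : v a nonterminal of the tree with low(e_v)/64 ≤ c(σ_v) }`.  Then
`c(E_σ) ≤ 16384 · c(S \ E_σ)`; in particular `c(E_σ) = O(c(S \ E_σ))`. -/
theorem cost_Esigma_le (M : MGame) (hqb : M.QuasiBipartite)
    (hc1 : ∀ e ∈ M.G.edgeSet, 1 ≤ M.c e)
    (S : M.State) (parent : M.V → M.V)
    (hparent : ∀ (u : M.U) (i : ℕ) (hi : i + 1 < (S u).1.support.length),
      (S u).1.support[i + 1]'hi = parent ((S u).1.support[i]'(by omega)))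
    (σ : M.V → Sym2 M.V)
    (hσ : ∀ v : M.V, (∃ e ∈ M.G.edgeSet, v ∈ e) →
      σ v ∈ M.G.edgeSet ∧ v ∈ σ v ∧ ∀ e ∈ M.G.edgeSet, v ∈ e → M.c (σ v) ≤ M.c e) :
    ∑ e ∈ (MGame.usedEdges S).filter (fun e => ∃ v : M.V, v ∉ M.U ∧ v ≠ M.r ∧
          (∃ u : M.U, v ∈ (S u).1.support) ∧ e = s(v, parent v) ∧
          MGame.elow M (s(v, parent v)) / 64 ≤ M.c (σ v)), M.c e ≤
      16384 * ∑ e ∈ MGame.usedEdges S \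
        ((MGame.usedEdges S).filter (fun e => ∃ v : M.V, v ∉ M.U ∧ v ≠ M.r ∧
          (∃ u : M.U, v ∈ (S u).1.support) ∧ e = s(v, parent v) ∧
          MGame.elow M (s(v, parent v)) / 64 ≤ M.c (σ v))), M.c e := by
  
  classical
  set A := (MGame.usedEdges S).filter (fun e => ∃ v : M.V, v ∉ M.U ∧ v ≠ M.r ∧
          (∃ u : M.U, v ∈ (S u).1.support) ∧ e = s(v, parent v) ∧
          MGame.elow M (s(v, parent v)) / 64 ≤ M.c (σ v)) with hA
  have hidx : ∀ (l : List M.V) (m n : ℕ) (h : m = n) (hm : m < l.length),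
      l[m] = l[n]'(h ▸ hm) := by
    intro l m n h hm; subst h; rfl
  have hDnonneg : (0:ℝ) ≤ ∑ e ∈ MGame.usedEdges S \ A, M.c e := by
    apply Finset.sum_nonneg
    intro e he
    have := hc1 e (used_sub_edgeSet' S e (Finset.mem_sdiff.mp he).1)
    linarith
  rcases Finset.eq_empty_or_nonempty A with hAe | ⟨e₀, he₀⟩
  · have h0 : ∑ e ∈ A, M.c e = 0 := by rw [hAe]; exact Finset.sum_empty
    rw [h0]; linarith
  have : Nonempty M.V := ⟨e₀.out.1⟩
  have H : ∀ e : Sym2 M.V, ∃ (fe : Sym2 M.V) (v : M.V), e ∈ A →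
      fe ∈ MGame.usedEdges S \ A ∧ v ∉ M.U ∧ v ∈ fe ∧
      (∀ w ∈ fe, w ≠ v → w ∈ M.U) ∧ e = s(v, parent v) ∧
      M.c e ≤ 16384 * M.c fe := by
    intro e
    by_cases heA : e ∈ A
    swap
    · exact ⟨e, Classical.arbitrary M.V, fun h => absurd h heA⟩
    rw [hA, Finset.mem_filter] at heA
    obtain ⟨heU, v, hvU, hvr, ⟨u, hvs⟩, hev, hlow⟩ := heA
    have heE : e ∈ M.G.edgeSet := used_sub_edgeSet' S e heU
    have hnd : (S u).1.support.Nodup := (S u).2.support_nodup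
    obtain ⟨i, hi, hiv⟩ := List.mem_iff_getElem.mp hvs
    have hlen : 0 < (S u).1.support.length := List.length_pos_iff.mpr (S u).1.support_ne_nil
    have h0 : (S u).1.support[0] = u.1 := by
      rw [List.getElem_of_eq (S u).1.support_eq_cons]; rfl
    have hlast : (S u).1.support[(S u).1.support.length - 1]'(by omega) = M.r :=
      (List.getLast_eq_getElem (l := (S u).1.support) (by simp)).symm.trans (S u).1.getLast_support
    have hi0 : i ≠ 0 := by
      intro h; subst h; rw [h0] at hiv; exact hvU (hiv ▸ u.2)
    have hilast : i ≠ (S u).1.support.length - 1 := by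
      intro h; subst h; exact hvr (hiv.symm.trans hlast)
    have hi1 : i + 1 < (S u).1.support.length := by omega
    have hpar : (S u).1.support[i+1] = parent v := by
      rw [← hiv]; exact hparent u i hi1
    have hparprev : (S u).1.support[i] =
        parent ((S u).1.support[i-1]'(by omega)) := by
      have h2 := hparent u (i-1) (by omega)
      exact (hidx _ i (i-1+1) (by omega) hi).trans h2
    have hfe : s((S u).1.support[i-1]'(by omega), v) ∈ (S u).1.edges := by
      have h3 := walk_edge_aux' (S u).1 (i-1) (by omega)
      have h2 : (S u).1.support[i-1+1]'(by omega) = v :=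
        (hidx _ (i-1+1) i (by omega) (by omega)).trans hiv
      rwa [h2] at h3
    set t : M.V := (S u).1.support[i-1]'(by omega) with ht
    have hfused : s(t, v) ∈ MGame.usedEdges S := by
      rw [MGame.usedEdges, Finset.mem_biUnion]
      exact ⟨u, Finset.mem_univ u, List.mem_toFinset.mpr hfe⟩
    have hfE : s(t, v) ∈ M.G.edgeSet := used_sub_edgeSet' S _ hfused
    have hadj : M.G.Adj t v := hfE
    have htU : t ∈ M.U := (hqb t v hadj).resolve_right hvU
    have htne : t ≠ parent v := by
      intro h
      have h4 : (S u).1.support[i-1]'(by omega) = (S u).1.support[i+1] := by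
        rw [← ht, h, hpar]
      have := (hnd.getElem_inj_iff).mp h4
      omega
    have hfne : s(t, v) ≠ e := by
      rw [hev]
      intro h
      rcases Sym2.eq_iff.mp h with ⟨h1, h2⟩ | ⟨h1, h2⟩
      · exact M.G.irrefl (h1 ▸ hadj)
      · exact htne h1
    have hfnA : s(t, v) ∉ A := by
      intro hmem
      rw [hA, Finset.mem_filter] at hmem
      obtain ⟨-, w, hwU, -, -, hfw, -⟩ := hmem
      have hwmem : w ∈ s(t, v) := by rw [hfw]; exact Sym2.mem_mk_left _ _
      rcases Sym2.mem_iff.mp hwmem with h | h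
      · exact hwU (h ▸ htU)
      · subst h; exact hfne (by rw [hfw, ← hev])
    have hσv := hσ v ⟨s(t, v), hfE, Sym2.mem_mk_right _ _⟩
    have hcσf : M.c (σ v) ≤ M.c (s(t, v)) := hσv.2.2 _ hfE (Sym2.mem_mk_right _ _)
    have hc1e : 1 ≤ M.c e := hc1 e heE
    have helow : M.c e < 256 * MGame.elow M e := by
      have h2 : M.c e < (⌊M.c e⌋₊ : ℝ) + 1 := Nat.lt_floor_add_one _
      have h3 : (⌊M.c e⌋₊ : ℝ) + 1 ≤ (256 : ℝ) ^ (Nat.log 256 ⌊M.c e⌋₊ + 1) := by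
        have h4 : (⌊M.c e⌋₊ : ℕ) + 1 ≤ 256 ^ (Nat.log 256 ⌊M.c e⌋₊ + 1) :=
          Nat.lt_pow_succ_log_self (by norm_num) _
        exact_mod_cast h4
      rw [MGame.elow]
      calc M.c e < (⌊M.c e⌋₊ : ℝ) + 1 := h2
        _ ≤ (256 : ℝ) ^ (Nat.log 256 ⌊M.c e⌋₊ + 1) := h3
        _ = 256 * (256 : ℝ) ^ (Nat.log 256 ⌊M.c e⌋₊) := by ring
    have hlow' : MGame.elow M e / 64 ≤ M.c (σ v) := by rw [hev]; exact hlow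
    have hcost : M.c e ≤ 16384 * M.c (s(t, v)) := by linarith
    exact ⟨s(t, v), v, fun _ => ⟨Finset.mem_sdiff.mpr ⟨hfused, hfnA⟩, hvU,
      Sym2.mem_mk_right _ _,
      (by intro w hw hwv
          rcases Sym2.mem_iff.mp hw with h | h
          · exact h ▸ htU
          · exact absurd h hwv), hev, hcost⟩⟩
  choose f vv hf using H
  have hinj : Set.InjOn f A := by
    intro e1 he1 e2 he2 hfe
    obtain ⟨-, h1U, h1m, -, h1e, -⟩ := hf e1 he1
    obtain ⟨-, h2U, h2m, h2o, h2e, -⟩ := hf e2 he2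
    have hm : vv e1 ∈ f e2 := hfe ▸ h1m
    have hveq : vv e1 = vv e2 := by
      by_contra hne
      exact h1U (h2o _ hm hne)
    rw [h1e, hveq, ← h2e]
  calc ∑ e ∈ A, M.c e ≤ ∑ e ∈ A, 16384 * M.c (f e) :=
        Finset.sum_le_sum (fun e he => (hf e he).2.2.2.2.2)
    _ = 16384 * ∑ e ∈ A, M.c (f e) := by rw [Finset.mul_sum]
    _ = 16384 * ∑ e ∈ A.image f, M.c e := by
        rw [Finset.sum_image (fun a ha b hb => hinj ha hb)]
    _ ≤ 16384 * ∑ e ∈ MGame.usedEdges S \ A, M.c e := by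
        apply mul_le_mul_of_nonneg_left _ (by norm_num)
        apply Finset.sum_le_sum_of_subset_of_nonneg
        · intro e he
          obtain ⟨a, ha, rfl⟩ := Finset.mem_image.mp he
          exact (hf a ha).1
        · intro e he hne
          have := hc1 e (used_sub_edgeSet' S e (Finset.mem_sdiff.mp he).1)
          linarith
end
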